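/- arXiv:1106.4977 — 5 statements merged into one kernel-verified Lean document; each statement's English description precedes it below -/
import Mathlib

section
/- Let A ⊂ ℝ be a finite set and let λ ∈ ℝ with λ > 1. For k ∈ ℕ let S_k ⊂ ℝ be the set of real numbers s of the form s = Σ_{i=1}^{l} c_i λ^{n_i} where l ≤ k and c_i ∈ A, n_i ∈ ℤ_{≥0} for each i. Then S_k is a discrete subset of ℝ for each k; that is, for every s ∈ S_k there exists ε > 0 such that S_k ∩ (s − ε, s + ε) = {s}. -/
/-- The set `S_k` of real numbers of the form `∑_{i=1}^l c_i λ^{n_i}` with `l ≤ k`,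
`c_i ∈ A` and `n_i ∈ ℕ`. -/
def GHK.Sset (A : Finset ℝ) (lam : ℝ) (k : ℕ) : Set ℝ :=
  {s : ℝ | ∃ l : ℕ, l ≤ k ∧ ∃ c : Fin l → ℝ, ∃ n : Fin l → ℕ,
    (∀ i, c i ∈ A) ∧ s = ∑ i, c i * lam ^ (n i)}

/-!
Every `S_k` meets each bounded interval `[-M, M]` in a finite set, which makes it discrete.
For the induction, factoring out the least power of `λ` gives
`S_{k+1} ⊆ {0} ∪ ⋃ n, λ ^ n • (A + S_k)`; the set `A + S_k` again meets bounded sets in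
finite sets, so its nonzero elements have modulus at least some `δ > 0`, and only the finitely
many `n` with `λ ^ n * δ ≤ M` contribute to `[-M, M]`.
-/

open Set Pointwise Topology

namespace GHK

def BoundedlyFinite (S : Set ℝ) : Prop :=
  ∀ M : ℝ, {x ∈ S | |x| ≤ M}.Finite

namespace BoundedlyFinite

variable {S T : Set ℝ}

theorem mono (hT : BoundedlyFinite T) (hST : S ⊆ T) : BoundedlyFinite S :=
  fun M => (hT M).subset fun _ hx => ⟨hST hx.1, hx.2⟩

theorem union (hS : BoundedlyFinite S) (hT : BoundedlyFinite T) : BoundedlyFinite (S ∪ T) :=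
  fun M => ((hS M).union (hT M)).subset fun _ ⟨hx, hxM⟩ => hx.imp (⟨·, hxM⟩) (⟨·, hxM⟩)

theorem _root_.Set.Finite.boundedlyFinite (hS : S.Finite) : BoundedlyFinite S :=
  fun _ => hS.subset (sep_subset _ _)

theorem add_left {A : Set ℝ} (hA : A.Finite) (hT : BoundedlyFinite T) :
    BoundedlyFinite (A + T) := by
  intro M
  refine (hA.biUnion fun a _ => (hT (M + |a|)).image (a + ·)).subset ?_
  rintro _ ⟨⟨a, ha, t, ht, rfl⟩, hM⟩
  refine mem_biUnion ha ⟨t, ⟨ht, ?_⟩, rfl⟩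
  calc |t| = |(a + t) - a| := by rw [add_sub_cancel_left]
    _ ≤ |a + t| + |a| := abs_sub _ _
    _ ≤ M + |a| := by gcongr

theorem exists_Ioo_inter_eq_singleton (hS : BoundedlyFinite S) {s : ℝ} (hs : s ∈ S) :
    ∃ ε > 0, S ∩ Ioo (s - ε) (s + ε) = {s} := by
  set F := {x ∈ S | |x| ≤ |s| + 1}
  have hnhds : Ioo (-(|s| + 1)) (|s| + 1) ∩ (F \ {s})ᶜ ∈ 𝓝 s := by
    refine Filter.inter_mem (Ioo_mem_nhds ?_ ?_) ((hS _).sdiff.isClosed.isOpen_compl.mem_nhds ?_)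
    · linarith [neg_abs_le s]
    · linarith [le_abs_self s]
    · simp
  obtain ⟨ε, hε, hball⟩ := Metric.mem_nhds_iff.1 hnhds
  refine ⟨ε, hε, subset_antisymm ?_ ?_⟩
  · rintro t ⟨htS, htε⟩
    rw [← Real.ball_eq_Ioo] at htε
    obtain ⟨htM, htF⟩ := hball htε
    by_contra hts
    exact htF ⟨⟨htS, abs_le.2 ⟨htM.1.le, htM.2.le⟩⟩, hts⟩
  · rintro _ rfl
    exact ⟨hs, by constructor <;> linarith⟩

theorem exists_pos_le_abs_of_ne_zero (hT : BoundedlyFinite T) :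
    ∃ δ > 0, ∀ t ∈ T, t ≠ 0 → δ ≤ |t| := by
  obtain ⟨δ, hδ, hball⟩ :=
    ((finite_singleton 0).boundedlyFinite.union hT).exists_Ioo_inter_eq_singleton
      (mem_union_left _ rfl)
  refine ⟨δ, hδ, fun t ht ht0 => not_lt.1 fun hlt => ht0 ?_⟩
  have : t ∈ ({0} ∪ T) ∩ Ioo (0 - δ) (0 + δ) := ⟨Or.inr ht, by simpa [abs_lt] using hlt⟩
  rwa [hball] at this

theorem iUnion_pow_smul {lam : ℝ} (hlam : 1 < lam) (hT : BoundedlyFinite T) :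
    BoundedlyFinite (⋃ n : ℕ, lam ^ n • T) := by
  intro M
  obtain ⟨δ, hδ, hδT⟩ := hT.exists_pos_le_abs_of_ne_zero
  obtain ⟨N, hN⟩ := pow_unbounded_of_one_lt (M / δ) hlam
  refine (((finite_lt_nat N).biUnion fun n _ => (hT M).smul_set (a := lam ^ n)).union
    (finite_singleton 0)).subset ?_
  rintro _ ⟨hx, hxM⟩
  obtain ⟨n, t, ht, rfl⟩ := mem_iUnion.1 hx
  rcases eq_or_ne t 0 with rfl | ht0
  · exact Or.inr (smul_zero _)
  have hpow : 1 ≤ lam ^ n := one_le_pow₀ hlam.le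
  have habs : |lam ^ n • t| = lam ^ n * |t| := by
    rw [smul_eq_mul, abs_mul, abs_of_pos (by positivity)]
  have htM : |t| ≤ M := le_trans (le_mul_of_one_le_left (abs_nonneg t) hpow) (habs ▸ hxM)
  have hn : lam ^ n < lam ^ N := by
    refine lt_of_le_of_lt ((le_div_iff₀ hδ).2 ?_) hN
    calc lam ^ n * δ ≤ lam ^ n * |t| := by gcongr; exact hδT t ht ht0
      _ ≤ M := habs ▸ hxM
  exact Or.inl (mem_biUnion ((pow_lt_pow_iff_right₀ hlam).1 hn) ⟨t, ⟨ht, htM⟩, rfl⟩)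

end BoundedlyFinite

variable (A : Finset ℝ)

theorem Sset_zero (lam : ℝ) : Sset A lam 0 = {0} := by
  ext s
  constructor
  · rintro ⟨l, hl, c, n, -, rfl⟩
    obtain rfl := Nat.le_zero.1 hl
    simp
  · rintro rfl
    exact ⟨0, le_rfl, Fin.elim0, Fin.elim0, fun i => i.elim0, by simp⟩

theorem Sset_succ_subset (lam : ℝ) (k : ℕ) :
    Sset A lam (k + 1) ⊆ {0} ∪ ⋃ n : ℕ, lam ^ n • ((A : Set ℝ) + Sset A lam k) := by
  rintro s ⟨l, hl, c, n, hc, rfl⟩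
  match l with
  | 0 => exact Or.inl (by simp)
  | m + 1 =>
    obtain ⟨j, -, hj⟩ := Finset.exists_min_image Finset.univ n ⟨0, Finset.mem_univ 0⟩
    have hrest :
        ∑ i : Fin m, c (j.succAbove i) * lam ^ (n (j.succAbove i) - n j) ∈ Sset A lam k :=
      ⟨m, Nat.le_of_succ_le_succ hl, _, _, fun i => hc _, rfl⟩
    refine Or.inr (mem_iUnion.2 ⟨n j, _, add_mem_add (hc j) hrest, ?_⟩)
    simp only [smul_eq_mul]
    rw [Fin.sum_univ_succAbove (fun i => c i * lam ^ n i) j, mul_add, Finset.mul_sum]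
    congr 1
    · ring
    · refine Finset.sum_congr rfl fun i _ => ?_
      rw [mul_left_comm, ← pow_add, Nat.add_sub_cancel' (hj _ (Finset.mem_univ _))]

theorem boundedlyFinite_Sset {lam : ℝ} (hlam : 1 < lam) (k : ℕ) :
    BoundedlyFinite (Sset A lam k) := by
  induction k with
  | zero => exact Sset_zero A lam ▸ (finite_singleton 0).boundedlyFinite
  | succ k ih =>
    exact ((finite_singleton 0).boundedlyFinite.union
      ((ih.add_left A.finite_toSet).iUnion_pow_smul hlam)).mono (Sset_succ_subset A lam k)

end GHK

/-- Lemma `discrete`: for a finite set `A ⊂ ℝ` and `λ > 1`, the set `S_k` is discrete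
for each `k`. -/
theorem GHK.Sset_discrete (A : Finset ℝ) (lam : ℝ) (hlam : 1 < lam) (k : ℕ) :
    ∀ s ∈ GHK.Sset A lam k, ∃ ε > (0 : ℝ),
      GHK.Sset A lam k ∩ Set.Ioo (s - ε) (s + ε) = {s} :=
  fun _ hs => (GHK.boundedlyFinite_Sset A hlam k).exists_Ioo_inter_eq_singleton hs
end

section
/- Let (a_i)_{i ∈ ℤ} be a sequence of integers with a_i ≥ 2 for all i. Define vectors v_i ∈ ℤ² by v₀ = (1,0), v₁ = (0,1), and the recursion v_{i−1} + v_{i+1} = a_i v_i for all i ∈ ℤ. Then det(v_i, v_{i+1}) = 1 for all i ∈ ℤ, and det(v_i, v_j) ≥ j − i for all integers i < j; in particular the vectors v_i, i ∈ ℤ, are pairwise distinct. -/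
/-!
Expanding `v (i + 1) = a i • v i - v (i - 1)` in the second slot shows that `det(v i, v (i + 1))` does
not depend on `i`, so it equals `det(v 0, v 1) = 1`. For fixed `i` the numbers `d n = det(v i, v (i + n))`
satisfy `d 0 = 0`, `d 1 = 1` and `d (n + 2) = a · d (n + 1) - d n` with `a ≥ 2`; such a sequence is
convex with increments at least `1`, hence `d n ≥ n`. Injectivity follows since `det(u, u) = 0`.
-/

/-- The determinant of the 2×2 integer matrix with columns `u`, `w`. -/
def GHK.det2 (u w : ℤ × ℤ) : ℤ := u.1 * w.2 - u.2 * w.1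

namespace GHK

theorem det2_self (u : ℤ × ℤ) : det2 u u = 0 := by
  unfold det2; ring

theorem det2_swap (u w : ℤ × ℤ) : det2 w u = -det2 u w := by
  unfold det2; ring

theorem det2_eq_of_add_eq_smul {u x y z : ℤ × ℤ} {c : ℤ} (h : x + z = c • y) :
    det2 u z = c * det2 u y - det2 u x := by
  have h₁ : x.1 + z.1 = c * y.1 := by simpa using congrArg Prod.fst h
  have h₂ : x.2 + z.2 = c * y.2 := by simpa using congrArg Prod.snd h
  unfold det2
  linear_combination u.1 * h₂ - u.2 * h₁

theorem natCast_le_of_add_eq_mul {d c : ℕ → ℤ} (hc : ∀ n, 2 ≤ c n) (h0 : d 0 = 0) (h1 : d 1 = 1)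
    (hrec : ∀ n, d n + d (n + 2) = c n * d (n + 1)) (n : ℕ) : (n : ℤ) ≤ d n := by
  suffices h : ∀ n : ℕ, (n : ℤ) ≤ d n ∧ d n + 1 ≤ d (n + 1) from (h n).1
  intro n
  induction n with
  | zero => simp [h0, h1]
  | succ n ih =>
    obtain ⟨hn, hstep⟩ := ih
    have hpos : 0 ≤ d (n + 1) := by linarith [n.cast_nonneg (α := ℤ)]
    refine ⟨by push_cast; linarith, ?_⟩
    nlinarith [hrec n, hc n]

section Recurrence

variable {a : ℤ → ℤ} {v : ℤ → ℤ × ℤ} (hrec : ∀ i : ℤ, v (i - 1) + v (i + 1) = a i • v i)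
include hrec

theorem det2_succ_periodic : Function.Periodic (fun i => det2 (v i) (v (i + 1))) 1 := by
  intro i
  have h := hrec (i + 1)
  rw [add_sub_cancel_right] at h
  simp only [det2_eq_of_add_eq_smul h, det2_self, mul_zero, zero_sub, det2_swap (v i), neg_neg]

theorem det2_succ_eq (i : ℤ) : det2 (v i) (v (i + 1)) = det2 (v 0) (v 1) := by
  simpa using (det2_succ_periodic hrec).int_mul_eq i

theorem natCast_le_det2_add (ha : ∀ i, 2 ≤ a i) (hv : det2 (v 0) (v 1) = 1) (i : ℤ) (n : ℕ) :
    (n : ℤ) ≤ det2 (v i) (v (i + n)) := by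
  refine natCast_le_of_add_eq_mul (d := fun n : ℕ => det2 (v i) (v (i + n)))
    (c := fun n => a (i + n + 1)) (fun _ => ha _)
    (by simp [det2_self]) (by simpa using (det2_succ_eq hrec i).trans hv) (fun n => ?_) n
  have h : v (i + n) + v (i + (n + 2)) = a (i + n + 1) • v (i + (n + 1)) := by
    have h := hrec (i + n + 1)
    ring_nf at h ⊢
    exact h
  push_cast
  rw [det2_eq_of_add_eq_smul h]
  ring

end Recurrence

end GHK

/-- The computation underlying Lemma `developingmap` and Example `negdefexample`:
for integers `a_i ≥ 2` and vectors `v_i ∈ ℤ²` with `v₀ = (1,0)`, `v₁ = (0,1)` and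
`v_{i−1} + v_{i+1} = a_i v_i`, one has `det(v_i, v_{i+1}) = 1` for all `i`,
`det(v_i, v_j) ≥ j − i` for all `i < j`, and the `v_i` are pairwise distinct. -/
theorem GHK.developing_map_det (a : ℤ → ℤ) (ha : ∀ i, 2 ≤ a i)
    (v : ℤ → ℤ × ℤ) (h0 : v 0 = (1, 0)) (h1 : v 1 = (0, 1))
    (hrec : ∀ i : ℤ, v (i - 1) + v (i + 1) = a i • v i) :
    (∀ i : ℤ, GHK.det2 (v i) (v (i + 1)) = 1) ∧
    (∀ i j : ℤ, i < j → j - i ≤ GHK.det2 (v i) (v j)) ∧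
    Function.Injective v := by
  have hv : GHK.det2 (v 0) (v 1) = 1 := by rw [h0, h1]; rfl
  have hgrowth : ∀ i j : ℤ, i < j → j - i ≤ GHK.det2 (v i) (v j) := by
    intro i j hij
    obtain ⟨n, hn⟩ := Int.eq_ofNat_of_zero_le (sub_nonneg.2 hij.le)
    rw [hn, show j = i + n by omega]
    exact GHK.natCast_le_det2_add hrec ha hv i n
  refine ⟨fun i => (GHK.det2_succ_eq hrec i).trans hv, hgrowth, ?_⟩
  refine Function.Injective.of_lt_imp_ne fun i j hij hv_eq => ?_
  have := hgrowth i j hij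
  rw [hv_eq, GHK.det2_self] at this
  omega
end

section
/- Let k be a field, let A₁ and A₂ be finitely generated commutative k-algebras, let B be a commutative k-algebra, and let f₁ : A₁ → B and f₂ : A₂ → B be surjective k-algebra homomorphisms. Then the fibre product A₁ ×_B A₂ := {(a₁, a₂) ∈ A₁ × A₂ : f₁(a₁) = f₂(a₂)} is a finitely generated k-algebra. -/
/-!
Lift generators of `A₁` and of `A₂` to the fibre product `P`, and add the elements `(0, z)` for
`z` in a finite generating set of the ideal `ker f₂` (finite because `A₂` is Noetherian). The
subalgebra `S` they generate surjects onto both factors. Since `(a, r) * (0, c) = (0, r * c)`,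
surjectivity onto `A₂` puts all of `0 × ker f₂` into `S`. Finally every `p ∈ P` is
`(p.1, b) + (0, p.2 - b)` with `(p.1, b) ∈ S`.
-/

namespace GHK

theorem map_adjoin_eq_top_of_subset_image {R A B : Type*} [CommSemiring R] [Semiring A]
    [Semiring B] [Algebra R A] [Algebra R B] (φ : A →ₐ[R] B) {s : Set B} {G : Set A}
    (hs : Algebra.adjoin R s = ⊤) (hsG : s ⊆ φ '' G) : (Algebra.adjoin R G).map φ = ⊤ := by
  rw [AlgHom.map_adjoin, eq_top_iff, ← hs]
  exact Algebra.adjoin_mono hsG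

section Prod

variable {R A B : Type*} [CommSemiring R] [Semiring A] [Semiring B] [Algebra R A] [Algebra R B]
  {S : Subalgebra R (A × B)}

theorem exists_mk_mem_of_map_fst_eq_top (hS : S.map (AlgHom.fst R A B) = ⊤) (a : A) :
    ∃ b, (a, b) ∈ S := by
  obtain ⟨p, hp, rfl⟩ := Subalgebra.mem_map.1 (hS ▸ Algebra.mem_top (x := a))
  exact ⟨p.2, hp⟩

theorem exists_mk_mem_of_map_snd_eq_top (hS : S.map (AlgHom.snd R A B) = ⊤) (b : B) :
    ∃ a, (a, b) ∈ S := by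
  obtain ⟨p, hp, rfl⟩ := Subalgebra.mem_map.1 (hS ▸ Algebra.mem_top (x := b))
  exact ⟨p.1, hp⟩

theorem zero_mk_mem_of_mem_span (hS : S.map (AlgHom.snd R A B) = ⊤) {t : Set B}
    (ht : ∀ z ∈ t, ((0 : A), z) ∈ S) {c : B} (hc : c ∈ Ideal.span t) :
    ((0 : A), c) ∈ S := by
  induction hc using Submodule.span_induction with
  | mem z hz => exact ht z hz
  | zero => exact S.zero_mem
  | add c₁ c₂ _ _ h₁ h₂ => simpa using S.add_mem h₁ h₂
  | smul r c _ hc =>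
    obtain ⟨a, ha⟩ := exists_mk_mem_of_map_snd_eq_top hS r
    simpa using S.mul_mem ha hc

end Prod

theorem equalizer_le_of_forall_mem {R A₁ A₂ C : Type*} [CommSemiring R] [Semiring A₁]
    [Ring A₂] [Ring C] [Algebra R A₁] [Algebra R A₂] [Algebra R C] {f₁ : A₁ →ₐ[R] C}
    {f₂ : A₂ →ₐ[R] C} {S : Subalgebra R (A₁ × A₂)}
    (hSP : S ≤ (f₁.comp (AlgHom.fst R A₁ A₂)).equalizer
      (f₂.comp (AlgHom.snd R A₁ A₂)))
    (hfst : ∀ a, ∃ b, (a, b) ∈ S) (hker : ∀ c ∈ RingHom.ker f₂, ((0 : A₁), c) ∈ S) :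
    (f₁.comp (AlgHom.fst R A₁ A₂)).equalizer (f₂.comp (AlgHom.snd R A₁ A₂)) ≤ S := by
  intro p hp
  obtain ⟨b, hb⟩ := hfst p.1
  have hp' : f₁ p.1 = f₂ p.2 := hp
  have hb' : f₁ p.1 = f₂ b := hSP hb
  have hdiff : p.2 - b ∈ RingHom.ker f₂ := by
    rw [RingHom.mem_ker, map_sub, ← hp', ← hb', sub_self]
  simpa using S.add_mem hb (hker _ hdiff)

end GHK

/-- The claim inside the proof of Lemma `intlemma`: if `A₁`, `A₂` are finitely generated
commutative algebras over a field `k`, `B` is a commutative `k`-algebra, and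
`f₁ : A₁ → B`, `f₂ : A₂ → B` are surjective `k`-algebra homomorphisms, then the fibre
product `A₁ ×_B A₂ = {(a₁, a₂) : f₁(a₁) = f₂(a₂)}`, viewed as a subalgebra of
`A₁ × A₂`, is a finitely generated `k`-algebra. -/
theorem GHK.fibreProduct_fg {k A₁ A₂ B : Type*} [Field k]
    [CommRing A₁] [CommRing A₂] [CommRing B]
    [Algebra k A₁] [Algebra k A₂] [Algebra k B]
    (hA₁ : Algebra.FiniteType k A₁) (hA₂ : Algebra.FiniteType k A₂)
    (f₁ : A₁ →ₐ[k] B) (f₂ : A₂ →ₐ[k] B)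
    (hf₁ : Function.Surjective f₁) (hf₂ : Function.Surjective f₂) :
    (AlgHom.equalizer (f₁.comp (AlgHom.fst k A₁ A₂))
      (f₂.comp (AlgHom.snd k A₁ A₂))).FG := by
  obtain ⟨s₁, hs₁, hs₁_top⟩ := Subalgebra.fg_def.1 hA₁.out
  obtain ⟨s₂, hs₂, hs₂_top⟩ := Subalgebra.fg_def.1 hA₂.out
  have := Algebra.FiniteType.isNoetherianRing k A₂
  obtain ⟨t, ht, ht_span⟩ := Submodule.fg_def.1 (IsNoetherian.noetherian (RingHom.ker f₂))
  let lift₁ (a : A₁) : A₁ × A₂ := (a, Function.surjInv hf₂ (f₁ a))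
  let lift₂ (b : A₂) : A₁ × A₂ := (Function.surjInv hf₁ (f₂ b), b)
  let G := lift₁ '' s₁ ∪ lift₂ '' s₂ ∪ (fun z ↦ ((0 : A₁), z)) '' t
  have hGP : G ⊆ (f₁.comp (AlgHom.fst k A₁ A₂)).equalizer
      (f₂.comp (AlgHom.snd k A₁ A₂)) := by
    rintro _ ((⟨a, -, rfl⟩ | ⟨b, -, rfl⟩) | ⟨z, hz, rfl⟩)
    · exact (Function.surjInv_eq hf₂ (f₁ a)).symm
    · exact Function.surjInv_eq hf₁ (f₂ b)
    · have : f₂ z = 0 := RingHom.mem_ker.1 (ht_span ▸ Ideal.subset_span hz)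
      simp [this]
  have hfst := map_adjoin_eq_top_of_subset_image (AlgHom.fst k A₁ A₂) (G := G) hs₁_top
    fun a ha ↦ ⟨lift₁ a, .inl (.inl ⟨a, ha, rfl⟩), rfl⟩
  have hsnd := map_adjoin_eq_top_of_subset_image (AlgHom.snd k A₁ A₂) (G := G) hs₂_top
    fun b hb ↦ ⟨lift₂ b, .inl (.inr ⟨b, hb, rfl⟩), rfl⟩
  have hker (c : A₂) (hc : c ∈ RingHom.ker f₂) : ((0 : A₁), c) ∈ Algebra.adjoin k G :=
    zero_mk_mem_of_mem_span hsnd (fun z hz ↦ Algebra.subset_adjoin (.inr ⟨z, hz, rfl⟩))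
      (by rwa [← ht_span] at hc)
  have hSP := Algebra.adjoin_le hGP
  exact Subalgebra.fg_def.2 ⟨G, ((hs₁.image _).union (hs₂.image _)).union (ht.image _),
    le_antisymm hSP
      (equalizer_le_of_forall_mem hSP (exists_mk_mem_of_map_fst_eq_top hfst) hker)⟩
end

section
/- Let a, b, c be positive real numbers, let λ ∈ ℝ with λ > 1, and let 0 < δ ≤ ε < 1. Then there exists a constant C > 0 such that for all N ∈ ℕ and all real x with δ ≤ x ≤ ε one has λ^{aN} · x^{c·λ^{bN}} ≤ C · x^N. -/
/-!
Taking logarithms, `λ^{aN} ε^{cλ^{bN}} ≤ C δ^N` becomes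
`(a log λ - log δ) N - c |log ε| e^{N b log λ} ≤ log C`; since `e^s ≥ s²/2` for `s ≥ 0`,
the left side is bounded above by a concave quadratic in `N`, hence by a constant.
For `δ ≤ x ≤ ε` the claim follows by monotonicity: `x^r ≤ ε^r` for `r ≥ 0` and `δ^N ≤ x^N`.
-/

namespace GHK

open Real

theorem mul_sub_mul_exp_le {K M β t : ℝ} (hM : 0 < M) (hβ : 0 < β) (ht : 0 ≤ t) :
    K * t - M * exp (β * t) ≤ K ^ 2 / (2 * M * β ^ 2) := by
  have hexp : (β * t) ^ 2 / 2 ≤ exp (β * t) := by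
    have hβt : 0 ≤ β * t := mul_nonneg hβ.le ht
    linarith [quadratic_le_exp_of_nonneg hβt]
  have hquad : K * t - M * β ^ 2 / 2 * t ^ 2 ≤ K ^ 2 / (2 * M * β ^ 2) := by
    rw [le_div_iff₀ (by positivity)]
    nlinarith [sq_nonneg (K - M * β ^ 2 * t)]
  nlinarith [mul_le_mul_of_nonneg_left hexp hM.le]

theorem exists_rpow_mul_rpow_rpow_le_mul_pow (a : ℝ) {b c lam δ ε : ℝ} (hb : 0 < b) (hc : 0 < c)
    (hlam : 1 < lam) (hδ : 0 < δ) (hε₀ : 0 < ε) (hε : ε < 1) :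
    ∃ C > (0 : ℝ), ∀ N : ℕ, lam ^ (a * N) * ε ^ (c * lam ^ (b * N)) ≤ C * δ ^ N := by
  have hlam₀ : 0 < lam := one_pos.trans hlam
  have hM : 0 < c * -log ε := mul_pos hc (neg_pos.2 (log_neg hε₀ hε))
  have hβ : 0 < b * log lam := mul_pos hb (log_pos hlam)
  refine ⟨exp ((a * log lam - log δ) ^ 2 / (2 * (c * -log ε) * (b * log lam) ^ 2)),
    exp_pos _, fun N => ?_⟩
  have hlin := mul_sub_mul_exp_le (K := a * log lam - log δ) hM hβ (Nat.cast_nonneg N)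
  rw [← rpow_natCast δ N, rpow_def_of_pos hlam₀, rpow_def_of_pos hlam₀, rpow_def_of_pos hε₀,
    rpow_def_of_pos hδ, ← exp_add, ← exp_add, exp_le_exp]
  rw [show log lam * (b * N) = b * log lam * N by ring]
  linarith

end GHK

theorem GHK.brokenline_estimate_general (a b c lam δ ε : ℝ)
    (hb : 0 < b) (hc : 0 < c) (hlam : 1 < lam)
    (hδ : 0 < δ) (hδε : δ ≤ ε) (hε : ε < 1) :
    ∃ C > (0 : ℝ), ∀ N : ℕ, ∀ x : ℝ, δ ≤ x → x ≤ ε →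
      lam ^ (a * (N : ℝ)) * x ^ (c * lam ^ (b * (N : ℝ))) ≤ C * x ^ N := by
  obtain ⟨C, hC, hbound⟩ :=
    exists_rpow_mul_rpow_rpow_le_mul_pow a hb hc hlam hδ (hδ.trans_le hδε) hε
  refine ⟨C, hC, fun N x hδx hxε => ?_⟩
  have hx : 0 < x := hδ.trans_le hδx
  have hexponent : 0 ≤ c * lam ^ (b * (N : ℝ)) := by positivity
  calc lam ^ (a * (N : ℝ)) * x ^ (c * lam ^ (b * (N : ℝ)))
      ≤ lam ^ (a * (N : ℝ)) * ε ^ (c * lam ^ (b * (N : ℝ))) := by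
        gcongr
    _ ≤ C * δ ^ N := hbound N
    _ ≤ C * x ^ N := by gcongr

/-- The concluding estimate in the proof of Lemma `brokenlinebounds`: for constants
`a, b, c > 0`, `λ > 1` and `0 < δ ≤ ε < 1`, there is a constant `C > 0` such that
`λ^{aN} · x^{c·λ^{bN}} ≤ C·x^N` for all `N ∈ ℕ` and all `x` with `δ ≤ x ≤ ε`.
(Here real exponents denote real powers.) -/
theorem GHK.brokenline_estimate (a b c lam δ ε : ℝ)
    (ha : 0 < a) (hb : 0 < b) (hc : 0 < c) (hlam : 1 < lam)
    (hδ : 0 < δ) (hδε : δ ≤ ε) (hε : ε < 1) :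
    ∃ C > (0 : ℝ), ∀ N : ℕ, ∀ x : ℝ, δ ≤ x → x ≤ ε →
      lam ^ (a * (N : ℝ)) * x ^ (c * lam ^ (b * (N : ℝ))) ≤ C * x ^ N :=
  GHK.brokenline_estimate_general a b c lam δ ε hb hc hlam hδ hδε hε
end

section
/- Let R > 1 be a real number, let (m_i)_{i ∈ ℤ} be integers with m_i ≥ 2 for all i, and let (x_i)_{i ∈ ℤ} be nonzero complex numbers and (a_i)_{i ∈ ℤ} complex numbers satisfying x_{i−1} x_{i+1} = a_i x_i^{m_i} and |a_i x_i^{m_i − 2}| < 1/R² for all i ∈ ℤ. Then |x_{j+1}/x_j| < (1/R²)^{j−i} · |x_{i+1}/x_i| for all integers j > i. Consequently, there do not exist integers i, j with j > i + 1 such that both |x_{i+1}| < R|x_i| and |x_{j−1}| < R|x_j| hold. -/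
/-!
Put `ρ i = |x_{i+1}/x_i|`. Dividing the relation `x_{i-1} x_{i+1} = a_i x_i^{m_i}` by `x_{i-1} x_i`
gives `ρ i = |a_i x_i^{m_i-2}| · ρ (i-1) < ρ (i-1) / R²`, so the ratios decay geometrically.
If `|x_{i+1}| < R|x_i|` and `|x_{j-1}| < R|x_j|` with `j ≥ i + 2`, then `ρ i < R` while
`1/R < ρ (j-1) < ρ i / R² < 1/R`.
-/

lemma div_eq_mul_zpow_sub_two_mul_div {K : Type*} [Field K] {u v w a : K} {m : ℤ}
    (hu : u ≠ 0) (hv : v ≠ 0) (h : u * w = a * v ^ m) :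
    w / v = a * v ^ (m - 2) * (v / u) := by
  rw [zpow_sub₀ hv, zpow_two]
  field_simp
  linear_combination h

lemma Int.lt_zpow_mul_of_forall_lt_mul {K : Type*} [Field K] [LinearOrder K]
    [IsStrictOrderedRing K] {r : ℤ → K} {c : K} (hc : 0 < c)
    (hstep : ∀ i, r (i + 1) < c * r i) {i j : ℤ} (hij : i < j) :
    r j < c ^ (j - i) * r i := by
  induction j, hij using Int.leInduction with
  | base => simpa using hstep i
  | succ k _ ih =>
    calc r (k + 1) < c * r k := hstep k
      _ < c * (c ^ (k - i) * r i) := mul_lt_mul_of_pos_left ih hc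
      _ = c ^ (k + 1 - i) * r i := by
        rw [show k + 1 - i = k - i + 1 by ring, zpow_add_one₀ hc.ne']
        ring

theorem GHK.cusp_disjoint_general (R : ℝ) (hR : 1 < R)
    (m : ℤ → ℤ)
    (x : ℤ → ℂ) (hx : ∀ i, x i ≠ 0) (a : ℤ → ℂ)
    (hrel : ∀ i : ℤ, x (i - 1) * x (i + 1) = a i * x i ^ (m i))
    (hsmall : ∀ i : ℤ, ‖a i * x i ^ (m i - 2)‖ < 1 / R ^ 2) :
    (∀ i j : ℤ, i < j →
      ‖x (j + 1) / x j‖ <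
        (1 / R ^ 2) ^ (j - i) * ‖x (i + 1) / x i‖) ∧
    ¬ ∃ i j : ℤ, i + 1 < j ∧ ‖x (i + 1)‖ < R * ‖x i‖ ∧
        ‖x (j - 1)‖ < R * ‖x j‖ := by
  have hR0 : 0 < R := one_pos.trans hR
  have hc : (0 : ℝ) < 1 / R ^ 2 := by positivity
  have hstep (i : ℤ) : ‖x (i + 1 + 1) / x (i + 1)‖ < 1 / R ^ 2 * ‖x (i + 1) / x i‖ := by
    have h := hrel (i + 1)
    rw [add_sub_cancel_right] at h
    rw [div_eq_mul_zpow_sub_two_mul_div (hx i) (hx (i + 1)) h, norm_mul]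
    exact mul_lt_mul_of_pos_right (hsmall (i + 1)) (norm_pos_iff.mpr (div_ne_zero (hx _) (hx _)))
  have hdecay (i j : ℤ) (hij : i < j) := Int.lt_zpow_mul_of_forall_lt_mul
    (r := fun k ↦ ‖x (k + 1) / x k‖) hc hstep hij
  refine ⟨hdecay, ?_⟩
  rintro ⟨i, j, hij, hi, hj⟩
  have hρi : ‖x (i + 1) / x i‖ < R := by
    rwa [norm_div, div_lt_iff₀ (norm_pos_iff.mpr (hx i))]
  have hρj : 1 / R < ‖x j / x (j - 1)‖ := by
    rwa [norm_div, div_lt_div_iff₀ hR0 (norm_pos_iff.mpr (hx (j - 1))), one_mul, mul_comm]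
  have hpow : (1 / R ^ 2) ^ (j - 1 - i) ≤ 1 / R ^ 2 := by
    simpa using zpow_le_zpow_right_of_le_one₀ hc
      ((div_le_one (by positivity)).mpr (by nlinarith)) (show (1 : ℤ) ≤ j - 1 - i by omega)
  have : ‖x j / x (j - 1)‖ < 1 / R := calc
    ‖x j / x (j - 1)‖ = ‖x (j - 1 + 1) / x (j - 1)‖ := by rw [sub_add_cancel]
    _ < (1 / R ^ 2) ^ (j - 1 - i) * ‖x (i + 1) / x i‖ := hdecay i (j - 1) (by omega)
    _ ≤ 1 / R ^ 2 * ‖x (i + 1) / x i‖ := mul_le_mul_of_nonneg_right hpow (norm_nonneg _)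
    _ < 1 / R ^ 2 * R := mul_lt_mul_of_pos_left hρi hc
    _ = 1 / R := by field_simp
  linarith

/-- The disjointness claim from the proof of part (2) of Theorem `cuspfamily`:
let `R > 1`, let `m_i ≥ 2` be integers, and let `x_i ∈ ℂ∗`, `a_i ∈ ℂ` satisfy
`x_{i−1}x_{i+1} = a_i x_i^{m_i}` and `|a_i x_i^{m_i−2}| < 1/R²` for all `i ∈ ℤ`.
Then `|x_{j+1}/x_j| < (1/R²)^{j−i}·|x_{i+1}/x_i|` for all `j > i`, and there are no
integers `i, j` with `j > i + 1`, `|x_{i+1}| < R|x_i|` and `|x_{j−1}| < R|x_j|`. -/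
theorem GHK.cusp_disjoint (R : ℝ) (hR : 1 < R)
    (m : ℤ → ℤ) (hm : ∀ i, 2 ≤ m i)
    (x : ℤ → ℂ) (hx : ∀ i, x i ≠ 0) (a : ℤ → ℂ)
    (hrel : ∀ i : ℤ, x (i - 1) * x (i + 1) = a i * x i ^ (m i))
    (hsmall : ∀ i : ℤ, ‖a i * x i ^ (m i - 2)‖ < 1 / R ^ 2) :
    (∀ i j : ℤ, i < j →
      ‖x (j + 1) / x j‖ <
        (1 / R ^ 2) ^ (j - i) * ‖x (i + 1) / x i‖) ∧
    ¬ ∃ i j : ℤ, i + 1 < j ∧ ‖x (i + 1)‖ < R * ‖x i‖ ∧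
        ‖x (j - 1)‖ < R * ‖x j‖ :=
  GHK.cusp_disjoint_general R hR m x hx a hrel hsmall
end
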